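/- Let N ≥ 1, let L be a real number, and let x = (x_1,…,x_{2N}) be positive reals satisfying the highest weight condition and Σ_{j=1}^{2N} x_j ≤ L. Let (μ^{(i)}, ν^{(i)}, N^{(i)})_{1≤i≤u} be produced by Algorithm B applied to x, and set λ^{(i)} := μ^{(1)} + ⋯ + μ^{(i)}. Then 2 Σ_{i=1}^{u} λ^{(i)} ν^{(i)} ≤ L; equivalently, 2 Σ_{i=1}^{u} μ^{(i)} N^{(i)} ≤ L. -/
import Mathlib


/-- A finite sequence of nonnegative reals (as a list, 0-indexed) satisfies the
*highest weight condition* if `∑_{i=1}^{k} (x_{2i-1} - x_{2i}) ≥ 0` for all `k`. -/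
def HWC (l : List ℝ) : Prop :=
  ∀ k : ℕ, 2 * k ≤ l.length →
    0 ≤ ∑ j ∈ Finset.range k, (l.getD (2 * j) 0 - l.getD (2 * j + 1) 0)

/-- One pass of zero-elimination on a list of nonnegative reals whose first entry is
positive, processed with explicit fuel (fuel `≥` the length of the list always
suffices).  A trailing run of zeros is deleted together with, if its length is odd, the
positive entry immediately preceding it (returned as the second component); an interior
run of zeros of even length is deleted; an interior run of zeros of odd length is merged
together with its positive neighbours `a, b` into the single entry `a + b`. -/
noncomputable def squashF : ℕ → List ℝ → List ℝ × ℝ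
  | 0, _ => ([], 0)
  | _ + 1, [] => ([], 0)
  | fuel + 1, a :: rest =>
    let m := (rest.takeWhile (fun t => decide (t = 0))).length
    let r := rest.drop m
    if r = [] then (if Even m then ([a], 0) else ([], a))
    else if Even m then
      let p := squashF fuel (r.headI :: r.tail)
      (a :: p.1, p.2)
    else squashF fuel ((a + r.headI) :: r.tail)

/-- Delete the run of zeros at the left end of `y`, then eliminate all remaining runs of
zeros; returns the resulting list together with the positive entry deleted at the right
end (`0` if no entry was deleted there). -/
noncomputable def contract (y : List ℝ) : List ℝ × ℝ :=
  let y' := y.drop ((y.takeWhile (fun t => decide (t = 0))).length)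
  squashF y'.length y'

/-- The minimum entry of a nonempty list of reals. -/
noncomputable def minL (l : List ℝ) : ℝ := l.foldr min l.headI

/-- One step of Algorithm B: subtract the minimum `μ` from every entry and eliminate the
runs of zeros, the positive entry preceding an odd right-end run of zeros being simply
deleted. -/
noncomputable def stepB (x : List ℝ) : List ℝ :=
  (contract (x.map (fun t => t - minL x))).1

/-- The data `(μ⁽ⁱ⁾, ν⁽ⁱ⁾)` produced by iterating Algorithm B while the current sequence
is nonempty (with fuel; fuel `≥` half the length always suffices). -/
noncomputable def algStepsB : ℕ → List ℝ → List (ℝ × ℕ)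
  | 0, _ => []
  | _ + 1, [] => []
  | fuel + 1, x@(_ :: _) =>
    (minL x, x.length / 2 - (stepB x).length / 2) :: algStepsB fuel (stepB x)

/-- The multiset containing, for each step `i` of the algorithm, the value
`λ⁽ⁱ⁾ = μ⁽¹⁾ + ⋯ + μ⁽ⁱ⁾` with multiplicity `ν⁽ⁱ⁾`; its sum is `∑_i λ⁽ⁱ⁾ ν⁽ⁱ⁾`. -/
noncomputable def diagMS : ℝ → List (ℝ × ℕ) → Multiset ℝ
  | _, [] => 0
  | acc, p :: t => Multiset.replicate p.2 (acc + p.1) + diagMS (acc + p.1) t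

lemma foldr_min_le_mem (l : List ℝ) (c t : ℝ) (h : t ∈ l) : l.foldr min c ≤ t := by
  induction l with
  | nil => simp at h
  | cons a s ih =>
    rcases List.mem_cons.mp h with h | h
    · subst h; exact min_le_left _ _
    · exact le_trans (min_le_right _ _) (ih h)

lemma foldr_min_nonneg (l : List ℝ) (c : ℝ) (hc : 0 ≤ c) (h : ∀ t ∈ l, 0 ≤ t) :
    0 ≤ l.foldr min c := by
  induction l with
  | nil => simpa
  | cons a s ih =>
    simp only [List.foldr_cons]
    exact le_min (h a (by simp)) (ih fun t ht => h t (by simp [ht]))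

lemma minL_nonneg (x : List ℝ) (h : ∀ t ∈ x, 0 ≤ t) : 0 ≤ minL x := by
  cases x with
  | nil => simp [minL]; exact le_of_eq rfl
  | cons a t => exact foldr_min_nonneg _ _ (h a (by simp)) h

lemma minL_le (x : List ℝ) (t : ℝ) (h : t ∈ x) : minL x ≤ t :=
  foldr_min_le_mem _ _ _ h

lemma sum_map_sub (x : List ℝ) (c : ℝ) :
    (x.map (fun t => t - c)).sum = x.sum - x.length * c := by
  induction x with
  | nil => simp
  | cons a t ih => simp [ih]; push_cast; ring

lemma squash_props : ∀ fuel (y : List ℝ), (∀ t ∈ y, 0 ≤ t) →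
    (∀ t ∈ (squashF fuel y).1, 0 ≤ t) ∧ (squashF fuel y).1.sum ≤ y.sum ∧
      (squashF fuel y).1.length ≤ y.length := by
  intro fuel
  induction fuel with
  | zero =>
    intro y hy
    simp only [squashF]
    exact ⟨by simp, by simpa using List.sum_nonneg hy, by simp⟩
  | succ n ih =>
    intro y hy
    cases y with
    | nil => simp [squashF]
    | cons a rest =>
      have ha : 0 ≤ a := hy a (by simp)
      have hrest : ∀ t ∈ rest, 0 ≤ t := fun t ht => hy t (by simp [ht])
      set m := (rest.takeWhile (fun t => decide (t = 0))).length with hm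
      set r := rest.drop m with hrdef
      have hrnn : ∀ t ∈ r, 0 ≤ t := fun t ht => hrest t (List.mem_of_mem_drop ht)
      have hsplit : (rest.take m).sum + r.sum = rest.sum := by
        rw [← List.sum_append, List.take_append_drop]
      have htake : 0 ≤ (rest.take m).sum :=
        List.sum_nonneg fun t ht => hrest t (List.mem_of_mem_take ht)
      have hrsum : r.sum ≤ rest.sum := by linarith
      have hrlen : r.length ≤ rest.length := by
        rw [hrdef, List.length_drop]; omega
      rw [show squashF (n+1) (a :: rest) =
        (if r = [] then (if Even m then ([a], 0) else ([], a))
        else if Even m then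
          ((a :: (squashF n (r.headI :: r.tail)).1), (squashF n (r.headI :: r.tail)).2)
        else squashF n ((a + r.headI) :: r.tail)) from rfl]
      by_cases hr : r = []
      · rw [if_pos hr]
        by_cases hev : Even m
        · rw [if_pos hev]
          refine ⟨?_, ?_, ?_⟩
          · intro t ht; simp at ht; subst ht; exact ha
          · simp; nlinarith [List.sum_nonneg hrest]
          · simp
        · rw [if_neg hev]
          exact ⟨by simp, by simp; nlinarith [List.sum_nonneg hrest], by simp⟩
      · rw [if_neg hr]
        obtain ⟨b, r', hbr⟩ := List.exists_cons_of_ne_nil hr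
        have hhead : r.headI = b := by rw [hbr]; rfl
        have htail : r.tail = r' := by rw [hbr]; rfl
        have hb : 0 ≤ b := hrnn b (by rw [hbr]; simp)
        have hr'nn : ∀ t ∈ r', 0 ≤ t := fun t ht => hrnn t (by rw [hbr]; simp [ht])
        by_cases hev : Even m
        · rw [if_pos hev]
          have hcons : r.headI :: r.tail = r := by rw [hhead, htail, hbr]
          rw [hcons]
          obtain ⟨hA, hB, hC⟩ := ih r hrnn
          refine ⟨?_, ?_, ?_⟩
          · intro t ht
            rcases List.mem_cons.mp ht with h | h
            · subst h; exact ha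
            · exact hA t h
          · simp only [List.sum_cons]; linarith
          · simp only [List.length_cons]; omega
        · rw [if_neg hev, hhead, htail]
          have hmem : ∀ t ∈ (a + b) :: r', 0 ≤ t := by
            intro t ht
            rcases List.mem_cons.mp ht with h | h
            · subst h; linarith
            · exact hr'nn t h
          obtain ⟨hA, hB, hC⟩ := ih ((a + b) :: r') hmem
          refine ⟨hA, ?_, ?_⟩
          · have : ((a + b) :: r').sum = a + r.sum := by rw [hbr]; simp; ring
            rw [this] at hB
            simp only [List.sum_cons]; linarith
          · have h1 : ((a + b) :: r').length = r.length := by rw [hbr]; simp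
            rw [h1] at hC
            simp only [List.length_cons]; omega

lemma stepB_props (x : List ℝ) (h : ∀ t ∈ x, 0 ≤ t) :
    (∀ t ∈ stepB x, 0 ≤ t) ∧ (stepB x).sum ≤ x.sum - x.length * minL x ∧
      (stepB x).length ≤ x.length := by
  unfold stepB contract
  set y := x.map (fun t => t - minL x) with hy
  have hynn : ∀ t ∈ y, 0 ≤ t := by
    intro t ht
    rw [hy, List.mem_map] at ht
    obtain ⟨s, hs, rfl⟩ := ht
    exact sub_nonneg.mpr (minL_le x s hs)
  set k := (y.takeWhile fun t => decide (t = 0)).length with hk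
  set y' := y.drop k with hy'
  have h1 : ∀ t ∈ y', 0 ≤ t := fun t ht => hynn t (List.mem_of_mem_drop ht)
  obtain ⟨hA, hB, hC⟩ := squash_props y'.length y' h1
  have hsplit : (y.take k).sum + y'.sum = y.sum := by
    rw [← List.sum_append, List.take_append_drop]
  have htake : 0 ≤ (y.take k).sum :=
    List.sum_nonneg fun t ht => hynn t (List.mem_of_mem_take ht)
  have hysum : y.sum = x.sum - x.length * minL x := by rw [hy, sum_map_sub]
  refine ⟨hA, by linarith, ?_⟩
  calc (squashF y'.length y').1.length ≤ y'.length := hC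
    _ ≤ y.length := by rw [hy', List.length_drop]; omega
    _ = x.length := by rw [hy, List.length_map]

lemma keyB : ∀ fuel (x : List ℝ) (acc : ℝ), 0 ≤ acc → (∀ t ∈ x, 0 ≤ t) →
    2 * (diagMS acc (algStepsB fuel x)).sum ≤
      2 * acc * ((x.length / 2 : ℕ) : ℝ) + x.sum := by
  intro fuel
  induction fuel with
  | zero =>
    intro x acc hacc hx
    have h1 : (0:ℝ) ≤ 2 * acc * ((x.length / 2 : ℕ) : ℝ) := by positivity
    have h2 := List.sum_nonneg hx
    simp only [algStepsB, diagMS, Multiset.sum_zero, mul_zero]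
    linarith
  | succ n ih =>
    intro x acc hacc hx
    cases x with
    | nil => simp [algStepsB, diagMS]
    | cons a rest =>
      obtain ⟨hynn, hysum, hylen⟩ := stepB_props (a :: rest) hx
      have hμ := minL_nonneg (a :: rest) hx
      have hIH := ih (stepB (a :: rest)) (acc + minL (a :: rest)) (by linarith) hynn
      rw [show algStepsB (n+1) (a :: rest) =
        (minL (a :: rest), (a :: rest).length / 2 - (stepB (a :: rest)).length / 2)
          :: algStepsB n (stepB (a :: rest)) from rfl]
      rw [show diagMS acc ((minL (a :: rest), (a :: rest).length / 2 -
          (stepB (a :: rest)).length / 2) :: algStepsB n (stepB (a :: rest))) =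
        Multiset.replicate ((a :: rest).length / 2 - (stepB (a :: rest)).length / 2)
          (acc + minL (a :: rest)) +
          diagMS (acc + minL (a :: rest)) (algStepsB n (stepB (a :: rest))) from rfl]
      rw [Multiset.sum_add, Multiset.sum_replicate, nsmul_eq_mul]
      have hdiv : (stepB (a :: rest)).length / 2 ≤ (a :: rest).length / 2 :=
        Nat.div_le_div_right hylen
      have hcast : (((a :: rest).length / 2 - (stepB (a :: rest)).length / 2 : ℕ) : ℝ) =
          (((a :: rest).length / 2 : ℕ) : ℝ) - (((stepB (a :: rest)).length / 2 : ℕ) : ℝ) := by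
        rw [Nat.cast_sub hdiv]
      rw [hcast]
      have hfloor : ((((a :: rest).length / 2 : ℕ)) : ℝ) * 2 ≤ ((a :: rest).length : ℝ) := by
        exact_mod_cast Nat.div_mul_le_self (a :: rest).length 2
      nlinarith [mul_nonneg hμ (by linarith :
        (0:ℝ) ≤ ((a :: rest).length : ℝ) - 2 * (((a :: rest).length / 2 : ℕ) : ℝ))]

/-- If `∑_j x_j ≤ L` then the Young diagram produced by Algorithm B has area at most
`L/2`, i.e. `2 ∑_{i=1}^{u} λ⁽ⁱ⁾ ν⁽ⁱ⁾ ≤ L`. -/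
theorem diagram_area_le (N : ℕ) (hN : 1 ≤ N) (L : ℝ) (x : List ℝ)
    (hlen : x.length = 2 * N) (hpos : ∀ t ∈ x, 0 < t) (hhwc : HWC x)
    (hsum : x.sum ≤ L) :
    2 * (diagMS 0 (algStepsB x.length x)).sum ≤ L := by
  have h := keyB x.length x 0 le_rfl (fun t ht => le_of_lt (hpos t ht))
  simp only [mul_zero, zero_mul, zero_add] at h
  linarith
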